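/- Let G be a second-countable étale groupoid. Then G is effective if and only if the set {x ∈ G⁽⁰⁾ : G^x_x = {x}} of units with trivial isotropy group is dense in G⁽⁰⁾. -/

import Mathlib

/-!
The units with nontrivial isotropy are exactly `s(Iso(G) \ G⁽⁰⁾)`. If `G` is effective, then
`Iso(G) \ G⁽⁰⁾` is closed with empty interior, hence nowhere dense; its image under the local
homeomorphism `s` is meagre because `G` is second countable, so by the Baire category theorem
(for the locally compact Hausdorff space `G`) its complement is dense and meets every open set of
units. Conversely, if the units with trivial isotropy are dense, the range of any open set of
isotropy arrows contains such a unit `x`, and the arrow of that set with range `x` must be `x`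
itself; so every interior point of `Iso(G)` lies in the closed set `G⁽⁰⁾`.
-/

/-- A groupoid in the sense of Renault/Hahn: a set `G` with a set of composable
pairs (encoded by the relation `Comp`), a multiplication defined on composable pairs
(encoded by a total function `mul` whose values on non-composable pairs are irrelevant),
and an inversion `inv`. -/
structure RGroupoid (G : Type*) where
  /-- `Comp α β` means `(α, β) ∈ G⁽²⁾`. -/
  Comp : G → G → Prop
  /-- the multiplication map -/
  mul : G → G → G
  /-- the inversion map -/
  inv : G → G
  inv_inv : ∀ γ, inv (inv γ) = γ
  comp_mul_left : ∀ {α β γ}, Comp α β → Comp β γ → Comp (mul α β) γ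
  comp_mul_right : ∀ {α β γ}, Comp α β → Comp β γ → Comp α (mul β γ)
  mul_assoc : ∀ {α β γ}, Comp α β → Comp β γ → mul (mul α β) γ = mul α (mul β γ)
  comp_inv : ∀ γ, Comp γ (inv γ)
  inv_mul_cancel : ∀ {γ η}, Comp γ η → mul (inv γ) (mul γ η) = η
  mul_inv_cancel : ∀ {γ η}, Comp γ η → mul (mul γ η) (inv η) = γ

namespace RGroupoid

variable {G : Type*} (S : RGroupoid G)

/-- The range map `r(γ) = γγ⁻¹`. -/
def r (γ : G) : G := S.mul γ (S.inv γ)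

/-- The source map `s(γ) = γ⁻¹γ`. -/
def s (γ : G) : G := S.mul (S.inv γ) γ

/-- The unit space `G⁽⁰⁾ = {γ⁻¹γ : γ ∈ G}`. -/
def units : Set G := {x | ∃ γ, S.s γ = x}

end RGroupoid

/-- A topological groupoid: a groupoid with a locally compact topology for which the unit
space is Hausdorff in the relative topology, `r`, `s` and inversion are continuous, and
multiplication is continuous on the set of composable pairs with the relative topology. -/
structure IsTopGroupoid {G : Type*} [TopologicalSpace G] (S : RGroupoid G) : Prop where
  locallyCompact : LocallyCompactSpace G
  t2_units : T2Space S.units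
  continuous_r : Continuous S.r
  continuous_s : Continuous S.s
  continuous_inv : Continuous S.inv
  continuous_mul : Continuous fun p : {p : G × G // S.Comp p.1 p.2} => S.mul p.1.1 p.1.2

/-- An étale groupoid: a topological groupoid in which the range map `r : G → G` is a
local homeomorphism. -/
structure IsEtaleGroupoid {G : Type*} [TopologicalSpace G] (S : RGroupoid G)
    extends IsTopGroupoid S : Prop where
  isLocalHomeomorph_r : IsLocalHomeomorph S.r

namespace RGroupoid

/-- `UV = {αβ : α ∈ U, β ∈ V, (α,β) ∈ G⁽²⁾}`. -/
def mulSet {G : Type*} (S : RGroupoid G) (U V : Set G) : Set G :=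
  {g | ∃ α ∈ U, ∃ β ∈ V, S.Comp α β ∧ S.mul α β = g}

end RGroupoid

/-- A subset `B` of an étale groupoid is a bisection if it is contained in an open set `U`
on which `r` and `s` restrict to homeomorphisms onto open subsets of the unit space. -/
def IsBisection {G : Type*} [TopologicalSpace G] (S : RGroupoid G) (B : Set G) : Prop :=
  ∃ U : Set G, B ⊆ U ∧ IsOpen U ∧ IsOpen (S.r '' U) ∧ IsOpen (S.s '' U) ∧
    IsHomeomorph (fun x : U => (⟨S.r x, Set.mem_image_of_mem S.r x.2⟩ : S.r '' U)) ∧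
    IsHomeomorph (fun x : U => (⟨S.s x, Set.mem_image_of_mem S.s x.2⟩ : S.s '' U))

namespace RGroupoid

variable {G : Type*} (S : RGroupoid G)

def isotropy : Set G := {γ | S.r γ = S.s γ}

lemma mem_isotropy {γ : G} : γ ∈ S.isotropy ↔ S.r γ = S.s γ := Iff.rfl

def trivialIsotropyUnits : Set G :=
  {x | x ∈ S.units ∧ ∀ γ, S.r γ = x → S.s γ = x → γ = x}

lemma comp_inv_left (γ : G) : S.Comp (S.inv γ) γ := by
  simpa only [S.inv_inv] using S.comp_inv (S.inv γ)

lemma s_eq_r_inv (γ : G) : S.s γ = S.r (S.inv γ) := by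
  rw [r, s, S.inv_inv]

lemma comp_r_r (γ : G) : S.Comp (S.r γ) (S.r γ) :=
  S.comp_mul_right (S.comp_mul_left (S.comp_inv γ) (S.comp_inv_left γ)) (S.comp_inv γ)

lemma mul_r_r (γ : G) : S.mul (S.r γ) (S.r γ) = S.r γ := by
  have h : S.Comp (S.inv γ) (S.r γ) := S.comp_mul_right (S.comp_inv_left γ) (S.comp_inv γ)
  calc S.mul (S.r γ) (S.r γ) = S.mul γ (S.mul (S.inv γ) (S.r γ)) :=
        S.mul_assoc (S.comp_inv γ) h
    _ = S.r γ := by rw [r, S.inv_mul_cancel (S.comp_inv γ)]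

lemma r_r (γ : G) : S.r (S.r γ) = S.r γ := by
  have h := S.mul_inv_cancel (S.comp_r_r γ)
  rwa [S.mul_r_r] at h

lemma s_r (γ : G) : S.s (S.r γ) = S.r γ := by
  have h := S.inv_mul_cancel (S.comp_r_r γ)
  rwa [S.mul_r_r] at h

lemma range_r : Set.range S.r = S.units := by
  ext x
  constructor
  · rintro ⟨γ, rfl⟩
    exact ⟨S.inv (S.r γ), by rw [s_eq_r_inv, S.inv_inv, r_r]⟩
  · rintro ⟨γ, rfl⟩
    exact ⟨S.inv γ, (S.s_eq_r_inv γ).symm⟩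

lemma mem_units_iff {x : G} : x ∈ S.units ↔ S.r x = x := by
  rw [← range_r]
  exact ⟨fun ⟨γ, hγ⟩ => hγ ▸ S.r_r γ, fun h => ⟨x, h⟩⟩

lemma r_of_mem_units {x : G} (hx : x ∈ S.units) : S.r x = x :=
  S.mem_units_iff.1 hx

lemma s_of_mem_units {x : G} (hx : x ∈ S.units) : S.s x = x := by
  rw [← range_r] at hx
  obtain ⟨γ, rfl⟩ := hx
  exact S.s_r γ

lemma s_mem_units (γ : G) : S.s γ ∈ S.units := ⟨γ, rfl⟩

lemma units_subset_isotropy : S.units ⊆ S.isotropy := fun _ hx =>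
  (S.r_of_mem_units hx).trans (S.s_of_mem_units hx).symm

lemma units_diff_image_s_subset_trivialIsotropyUnits :
    S.units \ S.s '' (S.isotropy \ S.units) ⊆ S.trivialIsotropyUnits := by
  rintro x ⟨hx, hxs⟩
  refine ⟨hx, fun γ hrγ hsγ => ?_⟩
  by_contra hγx
  have hγ : γ ∉ S.units := fun hγ => hγx (by rw [← hsγ, S.s_of_mem_units hγ])
  exact hxs ⟨γ, ⟨hrγ.trans hsγ.symm, hγ⟩, hsγ⟩

end RGroupoid

theorem IsLocalHomeomorph.isMeagre_image {X Y : Type*} [TopologicalSpace X] [TopologicalSpace Y]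
    [SecondCountableTopology X] {f : X → Y} (hf : IsLocalHomeomorph f) {A : Set X}
    (hA : IsMeagre A) : IsMeagre (f '' A) := by
  choose e hxe hfe using hf
  obtain ⟨c, hc, hcover⟩ :=
    TopologicalSpace.countable_cover_nhds fun x => (e x).open_source.mem_nhds (hxe x)
  have hsub : f '' A ⊆ ⋃ x ∈ c, (e x).source.domRestrict (e x) '' (Subtype.val ⁻¹' A) := by
    rintro _ ⟨a, ha, rfl⟩
    obtain ⟨x, hx, hax⟩ := Set.mem_iUnion₂.1 (hcover.symm ▸ Set.mem_univ a)
    exact Set.mem_iUnion₂.2 ⟨x, hx, ⟨a, hax⟩, ha, by simp [hfe x]⟩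
  refine (isMeagre_biUnion hc fun x _ => ?_).mono hsub
  exact (e x).isOpenEmbedding_restrict.isInducing.isMeagre_image
    (hA.preimage_of_isOpenMap continuous_subtype_val (e x).open_source.isOpenMap_subtype_val)

namespace IsEtaleGroupoid

variable {G : Type*} [TopologicalSpace G] {S : RGroupoid G}

lemma isOpen_units (hS : IsEtaleGroupoid S) : IsOpen S.units :=
  S.range_r ▸ hS.isLocalHomeomorph_r.isOpenMap.isOpen_range

lemma isClosed_units (hS : IsEtaleGroupoid S) [T2Space G] : IsClosed S.units := by
  rw [show S.units = {x | S.r x = x} from Set.ext fun _ => S.mem_units_iff]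
  exact isClosed_eq hS.continuous_r continuous_id

lemma isClosed_isotropy (hS : IsEtaleGroupoid S) [T2Space G] : IsClosed S.isotropy :=
  isClosed_eq hS.continuous_r hS.continuous_s

lemma isLocalHomeomorph_s (hS : IsEtaleGroupoid S) : IsLocalHomeomorph S.s := by
  have hinv : IsLocalHomeomorph S.inv :=
    (Homeomorph.mk ⟨S.inv, S.inv, S.inv_inv, S.inv_inv⟩ hS.continuous_inv
      hS.continuous_inv).isLocalHomeomorph
  rw [show S.s = S.r ∘ S.inv from funext S.s_eq_r_inv]
  exact hS.isLocalHomeomorph_r.comp hinv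

lemma units_subset_interior_isotropy (hS : IsEtaleGroupoid S) :
    S.units ⊆ interior S.isotropy :=
  interior_maximal S.units_subset_isotropy hS.isOpen_units

lemma interior_isotropy_subset_closure_units (hS : IsEtaleGroupoid S)
    (hdense : S.units ⊆ closure S.trivialIsotropyUnits) :
    interior S.isotropy ⊆ closure S.units := by
  intro γ hγ
  rw [mem_closure_iff]
  intro V hV hγV
  have hU : IsOpen (S.r '' (V ∩ interior S.isotropy)) :=
    hS.isLocalHomeomorph_r.isOpenMap _ (hV.inter isOpen_interior)
  have hrγ : S.r γ ∈ closure S.trivialIsotropyUnits := by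
    rw [S.mem_isotropy.1 (interior_subset hγ)]
    exact hdense (S.s_mem_units γ)
  obtain ⟨_, ⟨δ, ⟨hδV, hδ⟩, rfl⟩, hδT⟩ :=
    mem_closure_iff.1 hrγ _ hU ⟨γ, ⟨hγV, hγ⟩, rfl⟩
  have hδs : S.s δ = S.r δ := (S.mem_isotropy.1 (interior_subset hδ)).symm
  exact ⟨δ, hδV, hδT.2 δ rfl hδs ▸ hδT.1⟩

lemma isNowhereDense_isotropy_diff_units (hS : IsEtaleGroupoid S) [T2Space G]
    (heff : interior S.isotropy = S.units) : IsNowhereDense (S.isotropy \ S.units) := by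
  rw [(hS.isClosed_isotropy.sdiff hS.isOpen_units).isNowhereDense_iff,
    Set.eq_empty_iff_forall_notMem]
  intro γ hγ
  exact (interior_subset hγ).2 (heff ▸ interior_mono Set.sdiff_subset hγ)

lemma units_subset_closure_trivialIsotropyUnits (hS : IsEtaleGroupoid S) [T2Space G]
    [SecondCountableTopology G] (heff : interior S.isotropy = S.units) :
    S.units ⊆ closure S.trivialIsotropyUnits := by
  have := hS.locallyCompact
  have hmeagre : IsMeagre (S.s '' (S.isotropy \ S.units)) :=
    hS.isLocalHomeomorph_s.isMeagre_image (hS.isNowhereDense_isotropy_diff_units heff).isMeagre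
  calc S.units ⊆ closure (S.units ∩ (S.s '' (S.isotropy \ S.units))ᶜ) :=
        (dense_of_mem_residual hmeagre).open_subset_closure_inter hS.isOpen_units
    _ ⊆ closure S.trivialIsotropyUnits :=
        closure_mono S.units_diff_image_s_subset_trivialIsotropyUnits

end IsEtaleGroupoid

/-- A second-countable (Hausdorff) étale groupoid is effective (the interior of the
isotropy subgroupoid is the unit space) iff the set of units with trivial isotropy group
is dense in the unit space. -/
theorem effective_iff_trivial_isotropy_dense {G : Type*} [TopologicalSpace G]
    [SecondCountableTopology G] [T2Space G] (S : RGroupoid G) (hS : IsEtaleGroupoid S) :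
    interior {γ : G | S.r γ = S.s γ} = S.units ↔
      S.units ⊆ closure {x : G | x ∈ S.units ∧ ∀ γ, S.r γ = x → S.s γ = x → γ = x} := by
  refine ⟨hS.units_subset_closure_trivialIsotropyUnits, fun hdense => ?_⟩
  exact subset_antisymm
    ((hS.interior_isotropy_subset_closure_units hdense).trans hS.isClosed_units.closure_subset)
    hS.units_subset_interior_isotropy
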